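/- Let G be a finite connected simple graph with all degrees at least 1, and let k be odd. The average k-level friendship bias for the simple (backtracking) random walk equals zero if and only if G is regular. -/

import Mathlib

/-!
The walk is reversible with respect to the degrees, `dᵢ Pᵏ(i,j) = dⱼ Pᵏ(j,i)`, and its rows sum to
one. Writing the bias as `∑ᵢ ∑ⱼ Pᵏ(i,j) (dⱼ - dᵢ)` and averaging it with its transpose through the
reversibility relation gives `2 n Δ = ∑ᵢ ∑ⱼ Pᵏ(i,j) (dⱼ - dᵢ)² / dⱼ`, a sum of nonnegative terms.
So `Δ = 0` exactly when degrees agree wherever `Pᵏ(i,j) > 0`. For odd `k` this includes every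
edge, since `Pᵏ(i,j) ≥ (P(i,j) P(j,i))^((k-1)/2) P(i,j)`; by connectivity all degrees then agree.
-/

open Finset Matrix SimpleGraph

namespace Matrix

variable {ι R : Type*} [Fintype ι]

def IsReversible [Mul R] (P : Matrix ι ι R) (d : ι → R) : Prop :=
  ∀ i j, d i * P i j = d j * P j i

theorem IsReversible.pow [DecidableEq ι] [CommSemiring R] {P : Matrix ι ι R} {d : ι → R}
    (hP : P.IsReversible d) (m : ℕ) : (P ^ m).IsReversible d := by
  have hconj : SemiconjBy (diagonal d) P Pᵀ := by
    ext i j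
    simp [diagonal_mul, mul_diagonal, hP i j, mul_comm]
  intro i j
  simpa [SemiconjBy, diagonal_mul, mul_diagonal, ← transpose_pow, mul_comm] using
    congrFun₂ (hconj.pow_right m) i j

theorem mul_apply_pos {l m n : Type*} [Fintype m] [Semiring R] [PartialOrder R]
    [IsStrictOrderedRing R] {A : Matrix l m R} {B : Matrix m n R} (hA : ∀ i j, 0 ≤ A i j)
    (hB : ∀ i j, 0 ≤ B i j) {i : l} {j : n} (a : m) (hia : 0 < A i a) (haj : 0 < B a j) :
    0 < (A * B) i j :=
  sum_pos' (fun b _ => mul_nonneg (hA i b) (hB b j)) ⟨a, mem_univ a, mul_pos hia haj⟩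

theorem pow_apply_pos_of_odd [DecidableEq ι] [Semiring R] [PartialOrder R] [IsStrictOrderedRing R]
    {P : Matrix ι ι R} (hP : ∀ i j, 0 ≤ P i j) {i j : ι} (hij : 0 < P i j) (hji : 0 < P j i)
    {k : ℕ} (hk : Odd k) : 0 < (P ^ k) i j := by
  obtain ⟨m, rfl⟩ := hk
  induction m with
  | zero => simpa using hij
  | succ m ih =>
    have hii : 0 < (P ^ (2 * m + 1 + 1)) i i := by
      rw [pow_succ]
      exact mul_apply_pos (pow_apply_nonneg hP _) hP j ih hji
    rw [show 2 * (m + 1) + 1 = 2 * m + 1 + 1 + 1 by ring, pow_succ]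
    exact mul_apply_pos (pow_apply_nonneg hP _) hP i hii hij

theorem two_mul_sum_sum_mul_sub_eq_sum_sum_sq_div [Field R] {Q : Matrix ι ι R} {d : ι → R}
    (hrow : ∀ i, ∑ j, Q i j = 1) (hd : ∀ i, d i ≠ 0) (hQ : Q.IsReversible d) :
    2 * ∑ i, (∑ j, Q i j * d j - d i) = ∑ i, ∑ j, Q i j * (d j - d i) ^ 2 / d j := by
  have hdrift : ∀ i, ∑ j, Q i j * d j - d i = ∑ j, Q i j * (d j - d i) := fun i => by
    simp only [mul_sub, sum_sub_distrib, ← sum_mul, hrow, one_mul]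
  have hpair : ∀ i j,
      Q i j * (d j - d i) + Q j i * (d i - d j) = Q i j * (d j - d i) ^ 2 / d j := fun i j => by
    rw [eq_div_iff (hd j)]
    linear_combination (d j - d i) * hQ i j
  simp only [hdrift]
  rw [two_mul]
  nth_rw 2 [sum_comm]
  simp only [← sum_add_distrib, hpair]

theorem sum_sum_mul_sub_eq_zero_iff [Field R] [LinearOrder R] [IsStrictOrderedRing R]
    [DecidableEq ι] {Q : Matrix ι ι R} {d : ι → R} (hQ : Q ∈ rowStochastic R ι)
    (hd : ∀ i, 0 < d i) (hrev : Q.IsReversible d) :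
    ∑ i, (∑ j, Q i j * d j - d i) = 0 ↔ ∀ i j, 0 < Q i j → d i = d j := by
  have hnonneg : ∀ i j, 0 ≤ Q i j * (d j - d i) ^ 2 / d j := fun i j =>
    div_nonneg (mul_nonneg (nonneg_of_mem_rowStochastic hQ) (sq_nonneg _)) (hd j).le
  have hterm : ∀ i j, Q i j * (d j - d i) ^ 2 / d j = 0 ↔ (0 < Q i j → d i = d j) := fun i j => by
    rw [div_eq_zero_iff, mul_eq_zero, sq_eq_zero_iff, sub_eq_zero,
      (nonneg_of_mem_rowStochastic hQ).lt_iff_ne']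
    have := (hd j).ne'
    tauto
  rw [← mul_eq_zero_iff_left two_ne_zero, two_mul_sum_sum_mul_sub_eq_sum_sum_sq_div
    (fun i => sum_row_of_mem_rowStochastic hQ i) (fun i => (hd i).ne') hrev,
    sum_eq_zero_iff_of_nonneg fun i _ => sum_nonneg fun j _ => hnonneg i j]
  simp only [mem_univ, forall_const, sum_eq_zero_iff_of_nonneg fun j _ => hnonneg _ j, hterm]

end Matrix

namespace SimpleGraph

variable {V : Type*} {G : SimpleGraph V}

theorem Reachable.eq_of_forall_adj {β : Type*} {f : V → β} (hf : ∀ u v, G.Adj u v → f u = f v)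
    {u v : V} (h : G.Reachable u v) : f u = f v := by
  obtain ⟨w⟩ := h
  induction w with
  | nil => rfl
  | cons huv _ ih => exact (hf _ _ huv).trans ih

variable [Fintype V] [DecidableRel G.Adj]

variable (G) in
noncomputable def randomWalkMatrix : Matrix V V ℝ :=
  Matrix.of fun i j => G.adjMatrix ℝ i j / G.degree i

theorem degree_mul_randomWalkMatrix_apply (i j : V) :
    G.degree i * G.randomWalkMatrix i j = G.adjMatrix ℝ i j := by
  by_cases h : G.Adj i j
  · have : (G.degree i : ℝ) ≠ 0 := by exact_mod_cast (G.degree_pos_iff_exists_adj i).2 ⟨j, h⟩ |>.ne'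
    simp [randomWalkMatrix, h, this]
  · simp [randomWalkMatrix, h]

theorem isReversible_randomWalkMatrix :
    G.randomWalkMatrix.IsReversible fun i => (G.degree i : ℝ) := fun i j => by
  simp only [degree_mul_randomWalkMatrix_apply, adjMatrix_apply, G.adj_comm]

theorem randomWalkMatrix_pos_of_adj {i j : V} (h : G.Adj i j) : 0 < G.randomWalkMatrix i j := by
  simp [randomWalkMatrix, h, (G.degree_pos_iff_exists_adj i).2 ⟨j, h⟩]

theorem randomWalkMatrix_mem_rowStochastic [DecidableEq V] (hdeg : ∀ i, 0 < G.degree i) :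
    G.randomWalkMatrix ∈ rowStochastic ℝ V := by
  refine mem_rowStochastic_iff_sum.2 ⟨fun i j => ?_, fun i => ?_⟩
  · by_cases h : G.Adj i j
    · exact (randomWalkMatrix_pos_of_adj h).le
    · simp [randomWalkMatrix, h]
  · have : (G.degree i : ℝ) ≠ 0 := by exact_mod_cast (hdeg i).ne'
    simp [randomWalkMatrix, ← sum_div, ← neighborFinset_eq_filter, this]

end SimpleGraph

theorem stmt_4 (n : ℕ) (G : SimpleGraph (Fin n)) [DecidableRel G.Adj]
    (hconn : G.Connected) (hdeg : ∀ i, 1 ≤ G.degree i) (k : ℕ) (hk : Odd k)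
    (P : Matrix (Fin n) (Fin n) ℝ)
    (hP : ∀ i j, P i j = (G.adjMatrix ℝ) i j / (G.degree i : ℝ)) :
    (1 / (n : ℝ)) * ∑ i, ((∑ j, (P ^ k) i j * (G.degree j : ℝ)) - (G.degree i : ℝ)) = 0
      ↔ ∀ i j, G.degree i = G.degree j := by
  obtain rfl : P = G.randomWalkMatrix := Matrix.ext hP
  have hstoch : G.randomWalkMatrix ∈ rowStochastic ℝ (Fin n) :=
    randomWalkMatrix_mem_rowStochastic hdeg
  have hnonneg : ∀ i j, 0 ≤ G.randomWalkMatrix i j := fun _ _ => nonneg_of_mem_rowStochastic hstoch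
  have hn : (n : ℝ) ≠ 0 := by
    have := Fin.pos_iff_nonempty.2 hconn.nonempty
    positivity
  rw [mul_eq_zero_iff_left (one_div_ne_zero hn),
    sum_sum_mul_sub_eq_zero_iff (pow_mem hstoch k) (fun i => by exact_mod_cast hdeg i)
      (isReversible_randomWalkMatrix.pow k)]
  refine ⟨fun h i j => ?_, fun h i j _ => by exact_mod_cast h i j⟩
  refine Nat.cast_injective ((hconn i j).eq_of_forall_adj fun u v huv => h u v ?_)
  exact pow_apply_pos_of_odd hnonneg (randomWalkMatrix_pos_of_adj huv)
    (randomWalkMatrix_pos_of_adj huv.symm) hk
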